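/- If the initial quantile function satisfies X(z₂,0) - X(z₁,0) ≥ (bλ/(Lip(v)Lip(U)))(z₂-z₁) for all z₁ < z₂ (equivalently ‖ρ₀‖_{L^∞} ≤ Lip(v)Lip(U)/(bλ)), then the solution of the quantile equation satisfies X(z₂,t) - X(z₁,t) ≥ (bλ/(Lip(v)Lip(U)))(z₂-z₁) for all t ≥ 0, so ‖ρ(·,t)‖_{L^∞} ≤ Lip(v)Lip(U)/(bλ) for all t. -/

import Mathlib

/-!
With `c = bλ / (Lip v · Lip U)`, the gap `g = c (z₂ - z₁) - (X z₂ - X z₁)` between two quantiles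
obeys `g' ≤ Lip v · Lip U · g` wherever `g > 0`: `v` is decreasing, so only the case where the
drift argument at `z₂` exceeds the one at `z₁` matters, and there the Lipschitz bounds give
`g' ≤ Lip v (Lip U |X z₂ - X z₁| - λ (z₂ - z₁))`, in which `b ≤ Lip v` absorbs the `c (z₂ - z₁)`
part of `|X z₂ - X z₁|`. A barrier argument then keeps `g ≤ 0` for all time. The slope bound
makes `X(·, t)` injective on `[0, 1]` with a `c⁻¹`-Lipschitz inverse, so the pushforward of
Lebesgue measure has density at most `c⁻¹`.
-/

open MeasureTheory Set
open scoped ENNReal NNReal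

theorem norm_intervalIntegral_sub_le {E : Type*} [NormedAddCommGroup E] [NormedSpace ℝ E]
    {f g : ℝ → E} {a b C : ℝ} (hf : AEStronglyMeasurable f volume)
    (hg : AEStronglyMeasurable g volume) (hfg : ∀ x, ‖f x - g x‖ ≤ C) :
    ‖(∫ x in a..b, f x) - ∫ x in a..b, g x‖ ≤ C * |b - a| := by
  have hC : 0 ≤ C := (norm_nonneg _).trans (hfg 0)
  have hsub : IntervalIntegrable (f - g) volume a b :=
    (intervalIntegrable_const (c := C)).mono_fun' (hf.sub hg).restrict
      (Filter.Eventually.of_forall hfg)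
  by_cases hgi : IntervalIntegrable g volume a b
  · have hfi : IntervalIntegrable f volume a b := by simpa using hsub.add hgi
    rw [← intervalIntegral.integral_sub hfi hgi]
    exact intervalIntegral.norm_integral_le_of_norm_le_const fun x _ => hfg x
  · have hfi : ¬ IntervalIntegrable f volume a b := fun hfi => hgi (by simpa using hfi.sub hsub)
    rw [intervalIntegral.integral_undef hfi, intervalIntegral.integral_undef hgi, sub_zero,
      norm_zero]
    positivity

theorem abs_intervalIntegral_comp_sub_sub_le {U g : ℝ → ℝ} {L : ℝ}
    (hU : ∀ a b, |U a - U b| ≤ L * |a - b|) (hg : Measurable g) (x y a b : ℝ) :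
    |(∫ ζ in a..b, U (y - g ζ)) - ∫ ζ in a..b, U (x - g ζ)| ≤ L * |y - x| * |b - a| := by
  have hUc : Continuous U := by
    refine (LipschitzWith.of_dist_le_mul (K := L.toNNReal) fun p q => ?_).continuous
    rw [Real.dist_eq, Real.dist_eq]
    exact (hU p q).trans (mul_le_mul_of_nonneg_right (Real.le_coe_toNNReal L) (abs_nonneg _))
  have hm : ∀ z, AEStronglyMeasurable (fun ζ => U (z - g ζ)) volume := fun z =>
    (hUc.measurable.comp (measurable_const.sub hg)).aestronglyMeasurable
  refine norm_intervalIntegral_sub_le (hm y) (hm x) fun ζ => ?_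
  simpa only [Real.norm_eq_abs, sub_sub_sub_cancel_right] using hU (y - g ζ) (x - g ζ)

theorem hausdorffMeasure_le_of_dist_le_mul_dist {X Y : Type*} [MetricSpace X] [MetricSpace Y]
    [MeasurableSpace X] [BorelSpace X] [MeasurableSpace Y] [BorelSpace Y] {f : X → Y}
    {s : Set X} {K : ℝ≥0} {d : ℝ} (hd : 0 ≤ d)
    (hf : ∀ x ∈ s, ∀ y ∈ s, dist x y ≤ K * dist (f x) (f y)) :
    μH[d] s ≤ (K : ℝ≥0∞) ^ d * μH[d] (f '' s) := by
  have hanti : AntilipschitzWith K (s.domRestrict f) :=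
    AntilipschitzWith.of_le_mul_dist fun x y => hf x x.2 y y.2
  calc μH[d] s = μH[d] (univ : Set s) := by
        rw [← (isometry_subtype_coe (s := s)).hausdorffMeasure_image (Or.inl hd), image_univ,
          Subtype.range_coe]
    _ ≤ (K : ℝ≥0∞) ^ d * μH[d] (s.domRestrict f '' univ) := hanti.le_hausdorffMeasure_image hd _
    _ = (K : ℝ≥0∞) ^ d * μH[d] (f '' s) := by rw [image_univ, range_domRestrict]

theorem map_restrict_apply_le_of_dist_le_mul_dist {f : ℝ → ℝ} {s A : Set ℝ} {K : ℝ}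
    (hf : Measurable f) (hA : MeasurableSet A)
    (hfs : ∀ x ∈ s, ∀ y ∈ s, dist x y ≤ K * dist (f x) (f y)) :
    Measure.map f (volume.restrict s) A ≤ ENNReal.ofReal K * volume A := by
  have hK : ∀ x ∈ f ⁻¹' A ∩ s, ∀ y ∈ f ⁻¹' A ∩ s, dist x y ≤ K.toNNReal * dist (f x) (f y) :=
    fun x hx y hy => (hfs x hx.2 y hy.2).trans
      (mul_le_mul_of_nonneg_right (Real.le_coe_toNNReal K) dist_nonneg)
  rw [Measure.map_apply hf hA, Measure.restrict_apply (hf hA)]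
  calc volume (f ⁻¹' A ∩ s) ≤ ENNReal.ofReal K * volume (f '' (f ⁻¹' A ∩ s)) := by
        simpa only [hausdorffMeasure_real, ENNReal.rpow_one, ENNReal.ofReal] using
          hausdorffMeasure_le_of_dist_le_mul_dist zero_le_one hK
    _ ≤ ENNReal.ofReal K * volume A := by
        gcongr
        exact (image_mono inter_subset_left).trans (image_preimage_subset f A)

theorem nonpos_of_hasDerivWithinAt_le_mul {g g' : ℝ → ℝ} {a b K : ℝ}
    (hg : ContinuousOn g (Icc a b)) (hg' : ∀ t ∈ Ico a b, HasDerivWithinAt g (g' t) (Ici t) t)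
    (ha : g a ≤ 0) (hbound : ∀ t ∈ Ico a b, 0 < g t → g' t ≤ K * g t) :
    ∀ t ∈ Icc a b, g t ≤ 0 := by
  -- compare with the barriers `ε * exp ((K + 1) * (t - a))`, which outgrow the bound `K * g`
  have hbarrier : ∀ ε > 0, ∀ t ∈ Icc a b, g t ≤ ε * Real.exp ((K + 1) * (t - a)) := by
    intro ε hε
    have hB : ∀ t, HasDerivAt (fun t => ε * Real.exp ((K + 1) * (t - a)))
        (ε * Real.exp ((K + 1) * (t - a)) * (K + 1)) t := fun t => by
      simpa [mul_assoc] using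
        (((hasDerivAt_id t).sub_const a).const_mul (K + 1)).exp.const_mul ε
    refine image_le_of_deriv_right_lt_deriv_boundary hg hg' (by simpa using ha.trans hε.le) hB
      fun t ht hgt => ?_
    have hpos : 0 < ε * Real.exp ((K + 1) * (t - a)) := by positivity
    calc g' t ≤ K * g t := hbound t ht (hgt ▸ hpos)
      _ < _ := by rw [hgt]; nlinarith
  intro t ht
  have hE : 0 < Real.exp ((K + 1) * (t - a)) := Real.exp_pos _
  refine le_of_forall_pos_le_add fun ε hε => ?_
  calc g t ≤ ε / Real.exp ((K + 1) * (t - a)) * Real.exp ((K + 1) * (t - a)) :=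
        hbarrier _ (by positivity) t ht
    _ = 0 + ε := by field_simp; ring

theorem le_of_abs_sub_le_mul_of_sub_le_neg_mul {v : ℝ → ℝ} {L b : ℝ}
    (hv : ∀ x y, |v x - v y| ≤ L * |x - y|)
    (hvdec : ∀ x y, x ≤ y → v y - v x ≤ -b * (y - x)) : b ≤ L := by
  have hdec := hvdec 0 1 zero_le_one
  have hlip := hv 0 1
  norm_num at hdec hlip
  linarith [le_abs_self (v 0 - v 1)]

theorem sub_le_mul_max_of_antitone {v : ℝ → ℝ} {L : ℝ} (hv : ∀ x y, |v x - v y| ≤ L * |x - y|)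
    (hanti : Antitone v) (x y : ℝ) : v x - v y ≤ L * max (y - x) 0 := by
  rcases le_total y x with hyx | hxy
  · rw [max_eq_right (sub_nonpos.2 hyx), mul_zero]
    exact sub_nonpos.2 (hanti hyx)
  · rw [max_eq_left (sub_nonneg.2 hxy), ← abs_of_nonneg (sub_nonneg.2 hxy), abs_sub_comm]
    exact (le_abs_self _).trans (hv x y)

theorem drift_sub_le_of_gap_nonneg {v F : ℝ → ℝ} {Lv LU lam b x₁ x₂ z₁ z₂ : ℝ}
    (hLv : 0 < Lv) (hLU : 0 < LU) (hlam : 0 < lam) (hb : 0 < b)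
    (hv : ∀ x y, |v x - v y| ≤ Lv * |x - y|)
    (hvdec : ∀ x y, x ≤ y → v y - v x ≤ -b * (y - x))
    (hF : |F x₂ - F x₁| ≤ LU * |x₂ - x₁|) (hz : z₁ ≤ z₂)
    (hgap : 0 ≤ b * lam / (Lv * LU) * (z₂ - z₁) - (x₂ - x₁)) :
    v (F x₁ - lam * z₁) - v (F x₂ - lam * z₂) ≤
      Lv * LU * (b * lam / (Lv * LU) * (z₂ - z₁) - (x₂ - x₁)) := by
  set g := b * lam / (Lv * LU) * (z₂ - z₁) - (x₂ - x₁)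
  have hanti : Antitone v := fun x y hxy => by nlinarith [hvdec x y hxy]
  have hbLv : b ≤ Lv := le_of_abs_sub_le_mul_of_sub_le_neg_mul hv hvdec
  have habs : |x₂ - x₁| ≤ b * lam / (Lv * LU) * (z₂ - z₁) + g := by
    have : 0 ≤ b * lam / (Lv * LU) * (z₂ - z₁) := by
      have := sub_nonneg.2 hz; positivity
    rw [abs_le]; constructor <;> linarith
  have hgain : LU * (b * lam / (Lv * LU) * (z₂ - z₁)) ≤ lam * (z₂ - z₁) := by
    rw [← mul_assoc, mul_div_assoc', mul_comm LU, mul_div_mul_right _ _ hLU.ne']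
    gcongr
    rw [div_le_iff₀ hLv]
    nlinarith
  have hρ : (F x₂ - lam * z₂) - (F x₁ - lam * z₁) ≤ LU * g := by
    nlinarith [le_abs_self (F x₂ - F x₁), mul_le_mul_of_nonneg_left habs hLU.le]
  calc v (F x₁ - lam * z₁) - v (F x₂ - lam * z₂)
      ≤ Lv * max ((F x₂ - lam * z₂) - (F x₁ - lam * z₁)) 0 :=
        sub_le_mul_max_of_antitone hv hanti _ _
    _ ≤ Lv * (LU * g) := by gcongr; exact max_le hρ (by positivity)
    _ = Lv * LU * g := by ring

theorem dist_le_mul_dist_of_mul_sub_le {f : ℝ → ℝ} {s : Set ℝ} {c : ℝ} (hc : 0 < c)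
    (hf : ∀ x ∈ s, ∀ y ∈ s, x < y → c * (y - x) ≤ f y - f x) :
    ∀ x ∈ s, ∀ y ∈ s, dist x y ≤ c⁻¹ * dist (f x) (f y) := by
  have key : ∀ x ∈ s, ∀ y ∈ s, x ≤ y → dist x y ≤ c⁻¹ * dist (f x) (f y) := by
    intro x hx y hy hxy
    rw [le_inv_mul_iff₀ hc]
    rcases hxy.lt_or_eq with hlt | rfl
    · rw [dist_comm, Real.dist_eq, abs_of_pos (sub_pos.2 hlt), dist_comm, Real.dist_eq]
      exact (hf x hx y hy hlt).trans (le_abs_self _)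
    · simp
  intro x hx y hy
  rcases le_total x y with hxy | hyx
  · exact key x hx y hy hxy
  · rw [dist_comm, dist_comm (f x)]
    exact key y hy x hx hyx

theorem quantile_gap_lower_bound {Lv LU lam b : ℝ} (hLv : 0 < Lv) (hLU : 0 < LU)
    (hlam : 0 < lam) (hb : 0 < b) {v U : ℝ → ℝ}
    (hv : ∀ a b' : ℝ, |v a - v b'| ≤ Lv * |a - b'|)
    (hU : ∀ a b' : ℝ, |U a - U b'| ≤ LU * |a - b'|)
    (hvdec : ∀ r₁ r₂ : ℝ, r₁ ≤ r₂ → v r₂ - v r₁ ≤ -b * (r₂ - r₁))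
    {X : ℝ → ℝ → ℝ} (hXmeas : ∀ t : ℝ, Measurable (fun z => X z t))
    (hode : ∀ z ∈ Set.Icc (0:ℝ) 1, ∀ t, 0 ≤ t →
      HasDerivAt (X z) (v ((∫ ζ in (0:ℝ)..1, U (X z t - X ζ t)) - lam * z)) t)
    {z₁ z₂ t : ℝ} (hz₁ : 0 ≤ z₁) (hz : z₁ < z₂) (hz₂ : z₂ ≤ 1) (ht : 0 ≤ t)
    (hinit : b * lam / (Lv * LU) * (z₂ - z₁) ≤ X z₂ 0 - X z₁ 0) :
    b * lam / (Lv * LU) * (z₂ - z₁) ≤ X z₂ t - X z₁ t := by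
  set c := b * lam / (Lv * LU)
  set ρ := fun z τ => (∫ ζ in (0:ℝ)..1, U (X z τ - X ζ τ)) - lam * z
  have hderiv : ∀ τ, 0 ≤ τ →
      HasDerivAt (fun τ => c * (z₂ - z₁) - (X z₂ τ - X z₁ τ)) (v (ρ z₁ τ) - v (ρ z₂ τ)) τ :=
    fun τ hτ => by
      simpa using ((hode z₂ ⟨hz₁.trans hz.le, hz₂⟩ τ hτ).sub
        (hode z₁ ⟨hz₁, hz.le.trans hz₂⟩ τ hτ)).const_sub (c * (z₂ - z₁))
  have hbound : ∀ τ ∈ Ico 0 t, 0 < c * (z₂ - z₁) - (X z₂ τ - X z₁ τ) →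
      v (ρ z₁ τ) - v (ρ z₂ τ) ≤ Lv * LU * (c * (z₂ - z₁) - (X z₂ τ - X z₁ τ)) :=
    fun τ _ hgap => by
      refine drift_sub_le_of_gap_nonneg (F := fun x => ∫ ζ in (0:ℝ)..1, U (x - X ζ τ))
        hLv hLU hlam hb hv hvdec ?_ hz.le hgap.le
      simpa using abs_intervalIntegral_comp_sub_sub_le hU (hXmeas τ) (X z₁ τ) (X z₂ τ) 0 1
  have := nonpos_of_hasDerivWithinAt_le_mul
    (fun τ hτ => (hderiv τ hτ.1).continuousAt.continuousWithinAt)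
    (fun τ hτ => (hderiv τ hτ.1).hasDerivWithinAt) (by linarith) hbound t ⟨ht, le_rfl⟩
  linarith

/-- Threshold `L^∞` bound: if the initial quantile function satisfies
`X(z₂,0) - X(z₁,0) ≥ (bλ/(Lip(v)Lip(U)))(z₂ - z₁)` for all `z₁ < z₂` (i.e.
`‖ρ₀‖_{L^∞} ≤ Lip(v)Lip(U)/(bλ)`), then the same lower slope bound holds for all `t ≥ 0`,
so `‖ρ(·,t)‖_{L^∞} ≤ Lip(v)Lip(U)/(bλ)` for all `t`. -/
theorem stmt_11 (Lv LU lam b : ℝ) (hLv : 0 < Lv) (hLU : 0 < LU) (hlam : 0 < lam) (hb : 0 < b)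
    (v U : ℝ → ℝ)
    (hv : ∀ a b' : ℝ, |v a - v b'| ≤ Lv * |a - b'|)
    (hU : ∀ a b' : ℝ, |U a - U b'| ≤ LU * |a - b'|)
    (hvdec : ∀ r₁ r₂ : ℝ, r₁ ≤ r₂ → v r₂ - v r₁ ≤ -b * (r₂ - r₁))
    (X : ℝ → ℝ → ℝ) (hXmeas : ∀ t : ℝ, Measurable (fun z => X z t))
    (hode : ∀ z ∈ Set.Icc (0:ℝ) 1, ∀ t, 0 ≤ t →
      HasDerivAt (X z) (v ((∫ ζ in (0:ℝ)..1, U (X z t - X ζ t)) - lam * z)) t)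
    (hinit : ∀ z₁ z₂ : ℝ, 0 ≤ z₁ → z₁ < z₂ → z₂ ≤ 1 →
      b * lam / (Lv * LU) * (z₂ - z₁) ≤ X z₂ 0 - X z₁ 0) :
    (∀ t, 0 ≤ t → ∀ z₁ z₂ : ℝ, 0 ≤ z₁ → z₁ < z₂ → z₂ ≤ 1 →
        b * lam / (Lv * LU) * (z₂ - z₁) ≤ X z₂ t - X z₁ t) ∧
    (∀ t, 0 ≤ t → ∀ A : Set ℝ, MeasurableSet A →
        Measure.map (fun z => X z t) (volume.restrict (Set.Icc (0:ℝ) 1)) A ≤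
          ENNReal.ofReal (Lv * LU / (b * lam)) * volume A) := by
  have hgap : ∀ t, 0 ≤ t → ∀ z₁ z₂ : ℝ, 0 ≤ z₁ → z₁ < z₂ → z₂ ≤ 1 →
      b * lam / (Lv * LU) * (z₂ - z₁) ≤ X z₂ t - X z₁ t :=
    fun t ht z₁ z₂ hz₁ hz hz₂ => quantile_gap_lower_bound hLv hLU hlam hb hv hU hvdec hXmeas
      hode hz₁ hz hz₂ ht (hinit z₁ z₂ hz₁ hz hz₂)
  refine ⟨hgap, fun t ht A hA => ?_⟩
  have hexpand := dist_le_mul_dist_of_mul_sub_le (s := Icc 0 1) (f := fun z => X z t)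
    (by positivity : 0 < b * lam / (Lv * LU))
    fun z₁ hz₁ z₂ hz₂ hz => hgap t ht z₁ z₂ hz₁.1 hz hz₂.2
  rw [inv_div] at hexpand
  exact map_restrict_apply_le_of_dist_le_mul_dist (hXmeas t) hA hexpand
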